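/- For the saturated double integrator closed-loop system ẋ₁ = x₂, ẋ₂ = −sat_L(k_p x₁ + k_d x₂)/I with k_p, k_d, I, L > 0, the origin is globally asymptotically stable; in particular every trajectory converges to 0. -/

import Mathlib

noncomputable def sat (L y : ℝ) : ℝ := if |y| ≤ L then y else L * Real.sign y

/-!
With `Φ` the primitive of `sat L` vanishing at `0` and `s = kp x₁ + kd x₂`, the Lyapunov function
`V = Φ s + (kp I / 2) x₂²` satisfies `V' = -(kd / I) (sat L s)²`. So `V` decreases to a limit and
`x₂` stays bounded; then `s'` is bounded, `(sat L s)²` is uniformly continuous, and Barbalat's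
lemma gives `sat L s → 0`, i.e. `s → 0`. Now `x₂² = (V - Φ s) / (kp I / 2)` converges to some `q`,
and `P = kp x₁ x₂ + (kd / 2) x₂² = s x₂ - (kd / 2) x₂²` converges while
`P' = kp x₂² - s sat L s / I → kp q`, which forces `q = 0`. Finally `x₁ = (s - kd x₂) / kp → 0`.
-/

open Real Filter Set Topology

lemma tendsto_zero_of_tendsto_sq {α : Type*} {l : Filter α} {f : α → ℝ}
    (h : Tendsto (fun x => f x ^ 2) l (𝓝 0)) : Tendsto f l (𝓝 0) := by
  rw [tendsto_zero_iff_abs_tendsto_zero]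
  simpa [Function.comp_def, Real.sqrt_sq_eq_abs] using h.sqrt

lemma AntitoneOn.exists_tendsto_atTop {V : ℝ → ℝ} {a m : ℝ} (hV : AntitoneOn V (Ici a))
    (hm : ∀ t ≥ a, m ≤ V t) : ∃ c, Tendsto V atTop (𝓝 c) := by
  have hanti : Antitone fun t => V (max t a) := fun s t hst =>
    hV (le_max_right s a) (le_max_right t a) (max_le_max_right a hst)
  refine ⟨_, (tendsto_atTop_ciInf hanti ⟨m, ?_⟩).congr' ?_⟩
  · rintro _ ⟨t, rfl⟩
    exact hm _ (le_max_right t a)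
  · filter_upwards [eventually_ge_atTop a] with t ht
    rw [max_eq_left ht]

lemma Filter.Tendsto.comp_add_const_sub_self {V : ℝ → ℝ} {c : ℝ} (hV : Tendsto V atTop (𝓝 c))
    (h : ℝ) : Tendsto (fun t => V (t + h) - V t) atTop (𝓝 0) := by
  simpa using (hV.comp (tendsto_atTop_add_const_right _ h tendsto_id)).sub hV

lemma uniformContinuousOn_of_hasDerivAt_of_abs_le {f f' : ℝ → ℝ} {s : Set ℝ} {M : ℝ}
    (hs : Convex ℝ s) (hf : ∀ t ∈ s, HasDerivAt f (f' t) t) (hM : ∀ t ∈ s, |f' t| ≤ M) :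
    UniformContinuousOn f s := by
  refine (hs.lipschitzOnWith_of_nnnorm_hasDerivWithin_le (C := M.toNNReal)
    (fun t ht => (hf t ht).hasDerivWithinAt) fun t ht => ?_).uniformContinuousOn
  rw [← NNReal.coe_le_coe, coe_nnnorm, Real.coe_toNNReal', Real.norm_eq_abs]
  exact le_max_of_le_left (hM t ht)

theorem tendsto_deriv_zero_of_uniformContinuousOn {V V' : ℝ → ℝ} {a c : ℝ}
    (hV : ∀ t ≥ a, HasDerivAt V (V' t) t) (hV' : UniformContinuousOn V' (Ici a))
    (hVc : Tendsto V atTop (𝓝 c)) : Tendsto V' atTop (𝓝 0) := by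
  rw [Metric.tendsto_atTop]
  intro ε hε
  obtain ⟨δ, hδ, hclose⟩ := Metric.uniformContinuousOn_iff.1 hV' (ε / 2) (by positivity)
  obtain ⟨N, hN⟩ := Metric.tendsto_atTop.1 (hVc.comp_add_const_sub_self (δ / 2))
    (δ / 2 * (ε / 2)) (by positivity)
  refine ⟨max N a, fun t ht => ?_⟩
  have hta : a ≤ t := le_of_max_le_right ht
  obtain ⟨ξ, hξ, hξV'⟩ := exists_hasDerivAt_eq_slope V V' (by linarith : t < t + δ / 2)
    (fun u hu => (hV u (hta.trans hu.1)).continuousAt.continuousWithinAt)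
    (fun u hu => hV u (hta.trans hu.1.le))
  have hslope : |V' ξ| < ε / 2 := by
    have := hN t (le_of_max_le_left ht)
    rw [Real.dist_eq, sub_zero] at this
    rw [hξV', add_sub_cancel_left, abs_div, abs_of_pos (by positivity : 0 < δ / 2),
      div_lt_iff₀ (by positivity)]
    linarith
  have hnear : |V' t - V' ξ| < ε / 2 := by
    rw [← Real.dist_eq]
    refine hclose t hta ξ (hta.trans hξ.1.le) ?_
    rw [Real.dist_eq, abs_sub_comm, abs_of_pos (by linarith [hξ.1])]
    linarith [hξ.2]
  rw [Real.dist_eq, sub_zero]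
  linarith [abs_sub_abs_le_abs_sub (V' t) (V' ξ)]

theorem eq_zero_of_tendsto_of_tendsto_deriv {f f' : ℝ → ℝ} {a c l : ℝ}
    (hf : ∀ t ≥ a, HasDerivAt f (f' t) t) (hfc : Tendsto f atTop (𝓝 c))
    (hf'l : Tendsto f' atTop (𝓝 l)) : l = 0 := by
  have hslope : ∀ t, ∃ ξ ≥ t, a ≤ t → f' ξ = f (t + 1) - f t := by
    intro t
    by_cases ht : a ≤ t
    · obtain ⟨ξ, hξ, hξf'⟩ := exists_hasDerivAt_eq_slope f f' (lt_add_one t)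
        (fun u hu => (hf u (ht.trans hu.1)).continuousAt.continuousWithinAt)
        (fun u hu => hf u (ht.trans hu.1.le))
      exact ⟨ξ, hξ.1.le, fun _ => by simpa using hξf'⟩
    · exact ⟨t, le_rfl, fun h => absurd h ht⟩
  choose ξ hξt hξf' using hslope
  refine tendsto_nhds_unique ((hf'l.comp (tendsto_atTop_mono hξt tendsto_id)).congr' ?_)
    (hfc.comp_add_const_sub_self 1)
  filter_upwards [eventually_ge_atTop a] with t ht using hξf' t ht

lemma sat_eq_max_min {L : ℝ} (hL : 0 ≤ L) (y : ℝ) : sat L y = max (-L) (min L y) := by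
  unfold sat
  split_ifs with h
  · rw [abs_le] at h
    rw [min_eq_right h.2, max_eq_right h.1]
  · rcases lt_trichotomy y 0 with hy | rfl | hy
    · rw [abs_of_neg hy] at h
      rw [Real.sign_of_neg hy, min_eq_right (by linarith), max_eq_left (by linarith)]
      ring
    · simp_all
    · rw [abs_of_pos hy] at h
      rw [Real.sign_of_pos hy, min_eq_left (by linarith), max_eq_right (by linarith)]
      ring

lemma abs_sat {L : ℝ} (hL : 0 ≤ L) (y : ℝ) : |sat L y| = min |y| L := by
  rw [sat_eq_max_min hL]
  rcases le_total y (-L) with h | h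
  · rw [min_eq_right (by linarith), max_eq_left (by linarith), abs_neg, abs_of_nonneg hL,
      abs_of_nonpos (by linarith), min_eq_right (by linarith)]
  · rcases le_total y L with h' | h'
    · rw [min_eq_right h', max_eq_right h, min_eq_left (abs_le.2 ⟨h, h'⟩)]
    · rw [min_eq_left h', max_eq_right (by linarith), abs_of_nonneg hL,
        abs_of_nonneg (by linarith), min_eq_right h']

lemma lipschitzWith_sat {L : ℝ} (hL : 0 ≤ L) : LipschitzWith 1 (sat L) := by
  rw [funext (sat_eq_max_min hL)]
  exact (LipschitzWith.id.const_min L).const_max (-L)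

lemma uniformContinuous_sat_sq {L : ℝ} (hL : 0 ≤ L) : UniformContinuous fun y => sat L y ^ 2 := by
  refine (LipschitzWith.of_dist_le_mul (K := (2 * L).toNNReal) fun a b => ?_).uniformContinuous
  have hsum : |sat L a + sat L b| ≤ 2 * L := (abs_add_le _ _).trans <| by
    rw [abs_sat hL, abs_sat hL]
    linarith [min_le_right |a| L, min_le_right |b| L]
  have hlip : |sat L a - sat L b| ≤ |a - b| := by
    simpa [Real.dist_eq] using (lipschitzWith_sat hL).dist_le_mul a b
  rw [Real.dist_eq, Real.dist_eq, Real.coe_toNNReal _ (by positivity),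
    show sat L a ^ 2 - sat L b ^ 2 = (sat L a + sat L b) * (sat L a - sat L b) by ring, abs_mul]
  exact mul_le_mul hsum hlip (abs_nonneg _) (by positivity)

lemma tendsto_zero_of_tendsto_sat_sq {α : Type*} {l : Filter α} {L : ℝ} (hL : 0 < L) {f : α → ℝ}
    (h : Tendsto (fun x => sat L (f x) ^ 2) l (𝓝 0)) : Tendsto f l (𝓝 0) := by
  have hsat := (tendsto_zero_of_tendsto_sq h).abs
  rw [abs_zero] at hsat
  rw [tendsto_zero_iff_abs_tendsto_zero]
  refine hsat.congr' ?_
  filter_upwards [hsat.eventually (gt_mem_nhds hL)] with x hx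
  rw [abs_sat hL.le] at hx ⊢
  exact min_eq_left (not_le.1 fun h => hx.ne (min_eq_right h)).le

noncomputable def satPotential (L y : ℝ) : ℝ := ∫ u in (0 : ℝ)..y, sat L u

lemma hasDerivAt_satPotential {L : ℝ} (hL : 0 ≤ L) (y : ℝ) :
    HasDerivAt (satPotential L) (sat L y) y :=
  have hcont := (lipschitzWith_sat hL).continuous
  intervalIntegral.integral_hasDerivAt_right (hcont.intervalIntegrable _ _)
    (hcont.stronglyMeasurableAtFilter _ _) hcont.continuousAt

lemma satPotential_nonneg {L : ℝ} (hL : 0 ≤ L) (y : ℝ) : 0 ≤ satPotential L y := by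
  rcases le_total 0 y with hy | hy
  · refine intervalIntegral.integral_nonneg hy fun u hu => ?_
    rw [sat_eq_max_min hL]
    exact le_max_of_le_right (le_min hL hu.1)
  · rw [satPotential, intervalIntegral.integral_symm, neg_nonneg]
    calc ∫ u in y..0, sat L u ≤ ∫ _ in y..0, (0 : ℝ) :=
          intervalIntegral.integral_mono_on hy
            ((lipschitzWith_sat hL).continuous.intervalIntegrable _ _) intervalIntegrable_const
            fun u hu => ?_
      _ = 0 := by simp
    rw [sat_eq_max_min hL]
    exact max_le (neg_nonpos.2 hL) (min_le_of_right_le hu.2)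

def feedback (kp kd : ℝ) (x1 x2 : ℝ → ℝ) (t : ℝ) : ℝ := kp * x1 t + kd * x2 t

structure IsTrajectory (I kp kd L : ℝ) (x1 x2 : ℝ → ℝ) : Prop where
  hasDerivAt_fst : ∀ t : ℝ, 0 ≤ t → HasDerivAt x1 (x2 t) t
  hasDerivAt_snd : ∀ t : ℝ, 0 ≤ t → HasDerivAt x2 (-(sat L (feedback kp kd x1 x2 t)) / I) t

noncomputable def lyapunov (I kp kd L : ℝ) (x1 x2 : ℝ → ℝ) (t : ℝ) : ℝ :=
  satPotential L (feedback kp kd x1 x2 t) + kp * I / 2 * x2 t ^ 2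

lemma lyapunov_nonneg {I kp kd L : ℝ} (hI : 0 ≤ I) (hkp : 0 ≤ kp) (hL : 0 ≤ L)
    (x1 x2 : ℝ → ℝ) (t : ℝ) : 0 ≤ lyapunov I kp kd L x1 x2 t :=
  add_nonneg (satPotential_nonneg hL _) (by positivity)

namespace IsTrajectory

variable {I kp kd L : ℝ} {x1 x2 : ℝ → ℝ}

lemma hasDerivAt_feedback (hx : IsTrajectory I kp kd L x1 x2) {t : ℝ} (ht : 0 ≤ t) :
    HasDerivAt (feedback kp kd x1 x2)
      (kp * x2 t + kd * (-(sat L (feedback kp kd x1 x2 t)) / I)) t :=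
  ((hx.hasDerivAt_fst t ht).const_mul kp).add ((hx.hasDerivAt_snd t ht).const_mul kd)

lemma hasDerivAt_lyapunov (hx : IsTrajectory I kp kd L x1 x2) (hI : I ≠ 0) (hL : 0 ≤ L)
    {t : ℝ} (ht : 0 ≤ t) :
    HasDerivAt (lyapunov I kp kd L x1 x2) (-(kd / I) * sat L (feedback kp kd x1 x2 t) ^ 2) t := by
  refine (((hasDerivAt_satPotential hL _).comp t (hx.hasDerivAt_feedback ht)).add
    (((hx.hasDerivAt_snd t ht).pow 2).const_mul (kp * I / 2))).congr_deriv ?_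
  field_simp
  ring

lemma antitoneOn_lyapunov (hx : IsTrajectory I kp kd L x1 x2) (hI : 0 < I) (hkd : 0 ≤ kd)
    (hL : 0 ≤ L) : AntitoneOn (lyapunov I kp kd L x1 x2) (Ici 0) := by
  refine antitoneOn_of_hasDerivWithinAt_nonpos (convex_Ici 0)
    (fun t ht => (hx.hasDerivAt_lyapunov hI.ne' hL ht).continuousAt.continuousWithinAt)
    (fun t ht => (hx.hasDerivAt_lyapunov hI.ne' hL (interior_subset ht)).hasDerivWithinAt)
    fun t _ => ?_
  have : 0 ≤ kd / I := by positivity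
  nlinarith [sq_nonneg (sat L (feedback kp kd x1 x2 t))]

lemma exists_tendsto_lyapunov (hx : IsTrajectory I kp kd L x1 x2) (hI : 0 < I) (hkp : 0 ≤ kp)
    (hkd : 0 ≤ kd) (hL : 0 ≤ L) : ∃ c, Tendsto (lyapunov I kp kd L x1 x2) atTop (𝓝 c) :=
  (hx.antitoneOn_lyapunov hI hkd hL).exists_tendsto_atTop fun t _ =>
    lyapunov_nonneg hI.le hkp hL x1 x2 t

lemma exists_abs_snd_le (hx : IsTrajectory I kp kd L x1 x2) (hI : 0 < I) (hkp : 0 < kp)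
    (hkd : 0 ≤ kd) (hL : 0 ≤ L) : ∃ B, ∀ t ≥ 0, |x2 t| ≤ B := by
  refine ⟨√(2 * lyapunov I kp kd L x1 x2 0 / (kp * I)), fun t ht => Real.abs_le_sqrt ?_⟩
  rw [le_div_iff₀ (by positivity)]
  have hV := hx.antitoneOn_lyapunov hI hkd hL (mem_Ici.2 le_rfl) ht ht
  have hΦ := satPotential_nonneg hL (feedback kp kd x1 x2 t)
  unfold lyapunov at hV ⊢
  nlinarith

lemma uniformContinuousOn_feedback (hx : IsTrajectory I kp kd L x1 x2) (hI : 0 < I)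
    (hkp : 0 < kp) (hkd : 0 ≤ kd) (hL : 0 ≤ L) :
    UniformContinuousOn (feedback kp kd x1 x2) (Ici 0) := by
  obtain ⟨B, hB⟩ := hx.exists_abs_snd_le hI hkp hkd hL
  refine uniformContinuousOn_of_hasDerivAt_of_abs_le (M := kp * B + kd * L / I) (convex_Ici 0)
    (fun t ht => hx.hasDerivAt_feedback ht) fun t ht => ?_
  have hsat : kd * |sat L (feedback kp kd x1 x2 t)| / I ≤ kd * L / I := by
    rw [abs_sat hL]
    gcongr
    exact min_le_right _ _
  calc |kp * x2 t + kd * (-sat L (feedback kp kd x1 x2 t) / I)|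
      ≤ kp * |x2 t| + kd * |sat L (feedback kp kd x1 x2 t)| / I := by
        refine (abs_add_le _ _).trans_eq ?_
        rw [abs_mul, abs_mul, abs_div, abs_neg, abs_of_pos hkp, abs_of_nonneg hkd,
          abs_of_pos hI, mul_div_assoc]
    _ ≤ kp * B + kd * L / I := add_le_add (by gcongr; exact hB t ht) hsat

lemma tendsto_feedback (hx : IsTrajectory I kp kd L x1 x2) (hI : 0 < I) (hkp : 0 < kp)
    (hkd : 0 < kd) (hL : 0 < L) : Tendsto (feedback kp kd x1 x2) atTop (𝓝 0) := by
  obtain ⟨c, hc⟩ := hx.exists_tendsto_lyapunov hI hkp.le hkd.le hL.le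
  have hW : ∀ t ≥ 0, HasDerivAt (fun t => -(I / kd) * lyapunov I kp kd L x1 x2 t)
      (sat L (feedback kp kd x1 x2 t) ^ 2) t := fun t ht => by
    refine ((hx.hasDerivAt_lyapunov hI.ne' hL.le ht).const_mul (-(I / kd))).congr_deriv ?_
    field_simp
  exact tendsto_zero_of_tendsto_sat_sq hL (tendsto_deriv_zero_of_uniformContinuousOn hW
    ((uniformContinuous_sat_sq hL.le).comp_uniformContinuousOn
      (hx.uniformContinuousOn_feedback hI hkp hkd.le hL.le)) (hc.const_mul _))

lemma exists_tendsto_snd_sq (hx : IsTrajectory I kp kd L x1 x2) (hI : 0 < I) (hkp : 0 < kp)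
    (hkd : 0 < kd) (hL : 0 < L) : ∃ q, Tendsto (fun t => x2 t ^ 2) atTop (𝓝 q) := by
  obtain ⟨c, hc⟩ := hx.exists_tendsto_lyapunov hI hkp.le hkd.le hL.le
  have hΦ : Tendsto (fun t => satPotential L (feedback kp kd x1 x2 t)) atTop (𝓝 0) := by
    have h0 : satPotential L 0 = 0 := intervalIntegral.integral_same
    simpa [h0, Function.comp_def] using (hasDerivAt_satPotential hL.le 0).continuousAt.tendsto.comp
      (hx.tendsto_feedback hI hkp hkd hL)
  refine ⟨_, ((hc.sub hΦ).div_const (kp * I / 2)).congr fun t => ?_⟩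
  simp only [lyapunov]
  field_simp
  ring

lemma tendsto_snd (hx : IsTrajectory I kp kd L x1 x2) (hI : 0 < I) (hkp : 0 < kp)
    (hkd : 0 < kd) (hL : 0 < L) : Tendsto x2 atTop (𝓝 0) := by
  obtain ⟨q, hq⟩ := hx.exists_tendsto_snd_sq hI hkp hkd hL
  obtain ⟨B, hB⟩ := hx.exists_abs_snd_le hI hkp hkd.le hL.le
  have hs := hx.tendsto_feedback hI hkp hkd hL
  have hP : ∀ t ≥ 0, HasDerivAt (fun t => kp * x1 t * x2 t + kd / 2 * x2 t ^ 2)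
      (kp * x2 t ^ 2 - feedback kp kd x1 x2 t * sat L (feedback kp kd x1 x2 t) / I) t :=
    fun t ht => ((((hx.hasDerivAt_fst t ht).const_mul kp).mul (hx.hasDerivAt_snd t ht)).add
      (((hx.hasDerivAt_snd t ht).pow 2).const_mul (kd / 2))).congr_deriv
        (by simp only [feedback]; ring)
  have hsx2 : Tendsto (fun t => feedback kp kd x1 x2 t * x2 t) atTop (𝓝 0) :=
    hs.zero_mul_isBoundedUnder_le (isBoundedUnder_of_eventually_le (a := B)
      ((eventually_ge_atTop 0).mono hB))
  have hPlim : Tendsto (fun t => kp * x1 t * x2 t + kd / 2 * x2 t ^ 2) atTop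
      (𝓝 (0 - kd / 2 * q)) :=
    (hsx2.sub (hq.const_mul (kd / 2))).congr fun t => by simp only [feedback]; ring
  have hP'lim := (hq.const_mul kp).sub
    ((hs.mul ((lipschitzWith_sat hL.le).continuous.tendsto 0 |>.comp hs)).div_const I)
  have hkpq := eq_zero_of_tendsto_of_tendsto_deriv hP hPlim hP'lim
  rw [zero_mul, zero_div, sub_zero] at hkpq
  rw [(mul_eq_zero.1 hkpq).resolve_left hkp.ne'] at hq
  exact tendsto_zero_of_tendsto_sq hq

lemma tendsto_fst (hx : IsTrajectory I kp kd L x1 x2) (hI : 0 < I) (hkp : 0 < kp)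
    (hkd : 0 < kd) (hL : 0 < L) : Tendsto x1 atTop (𝓝 0) := by
  have := ((hx.tendsto_feedback hI hkp hkd hL).sub
    ((hx.tendsto_snd hI hkp hkd hL).const_mul kd)).div_const kp
  rw [mul_zero, sub_zero, zero_div] at this
  exact this.congr fun t => by simp only [feedback]; field_simp; ring

end IsTrajectory

theorem saturated_double_integrator_GAS (I kp kd L : ℝ)
    (hI : 0 < I) (hkp : 0 < kp) (hkd : 0 < kd) (hL : 0 < L)
    (x1 x2 : ℝ → ℝ)
    (h1 : ∀ t : ℝ, 0 ≤ t → HasDerivAt x1 (x2 t) t)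
    (h2 : ∀ t : ℝ, 0 ≤ t → HasDerivAt x2 (-(sat L (kp * x1 t + kd * x2 t)) / I) t) :
    Filter.Tendsto x1 Filter.atTop (nhds 0) ∧ Filter.Tendsto x2 Filter.atTop (nhds 0) := by
  have hx : IsTrajectory I kp kd L x1 x2 := ⟨h1, h2⟩
  exact ⟨hx.tendsto_fst hI hkp hkd hL, hx.tendsto_snd hI hkp hkd hL⟩
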